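/- Let Σ be a finite alphabet, N ≥ 1, T = 2^{N+1}+1, and let p_1, …, p_k ∈ Σ* and l_1, …, l_k ∈ Σ^+. Let n, n' ∈ ℕ^{k−1} be such that min(n_i, T) = min(n'_i, T) for every i ∈ {1,…,k−1}. Then p_1 l_1^{n_1} ⋯ p_{k−1} l_{k−1}^{n_{k−1}} p_k l_k^ω ≡_N p_1 l_1^{n'_1} ⋯ p_{k−1} l_{k−1}^{n'_{k−1}} p_k l_k^ω. -/

import Mathlib

namespace Stmt2

variable {Γ : Type*}

/-- `m`-fold concatenation of a finite word. -/
def lpow (u : List Γ) : ℕ → List Γ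
  | 0 => []
  | m + 1 => u ++ lpow u m

/-- Concatenation of a finite word with an ω-word. -/
def wcat (u : List Γ) (w : ℕ → Γ) : ℕ → Γ := fun n =>
  if h : n < u.length then u.get ⟨n, h⟩ else w (n - u.length)

/-- Syntax of first-order logic `FO_Γ` over ω-words over `Γ`:
variables are natural numbers (interpreted as positions), atomic formulas are
`a(z)` for each letter `a`, `S(z,z')`, `z < z'` and `z = z'`,
closed under `¬`, `∧` and `∃`. -/
inductive FO (Γ : Type*) : Type _
  | letter : Γ → ℕ → FO Γ
  | succ : ℕ → ℕ → FO Γ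
  | lt : ℕ → ℕ → FO Γ
  | eq : ℕ → ℕ → FO Γ
  | not : FO Γ → FO Γ
  | and : FO Γ → FO Γ → FO Γ
  | ex : ℕ → FO Γ → FO Γ

/-- Satisfaction of an FO formula on an ω-word under an assignment of variables
to positions. -/
def FO.Sat (w : ℕ → Γ) : FO Γ → (ℕ → ℕ) → Prop
  | .letter a z, f => w (f z) = a
  | .succ z z', f => f z' = f z + 1
  | .lt z z', f => f z < f z'
  | .eq z z', f => f z = f z'
  | .not φ, f => ¬ FO.Sat w φ f
  | .and φ ψ, f => FO.Sat w φ f ∧ FO.Sat w ψ f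
  | .ex z φ, f => ∃ pos : ℕ, FO.Sat w φ (Function.update f z pos)

/-- Quantifier height: maximal nesting depth of `∃`. -/
def FO.qh : FO Γ → ℕ
  | .letter _ _ => 0
  | .succ _ _ => 0
  | .lt _ _ => 0
  | .eq _ _ => 0
  | .not φ => FO.qh φ
  | .and φ ψ => max (FO.qh φ) (FO.qh ψ)
  | .ex _ φ => FO.qh φ + 1

/-- Free variables of an FO formula. -/
def FO.free : FO Γ → Finset ℕ
  | .letter _ z => {z}
  | .succ z z' => {z, z'}
  | .lt z z' => {z, z'}
  | .eq z z' => {z, z'}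
  | .not φ => FO.free φ
  | .and φ ψ => FO.free φ ∪ FO.free ψ
  | .ex z φ => (FO.free φ).erase z

/-- Satisfaction of a sentence (the assignment is irrelevant, so we fix one). -/
def FO.SatS (w : ℕ → Γ) (φ : FO Γ) : Prop := FO.Sat w φ fun _ => 0

/-- `w ≡_n w'`: the two ω-words satisfy exactly the same FO sentences
of quantifier height at most `n`. -/
def FOEquiv (n : ℕ) (w w' : ℕ → Γ) : Prop :=
  ∀ φ : FO Γ, FO.free φ = ∅ → FO.qh φ ≤ n → (FO.SatS w φ ↔ FO.SatS w' φ)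

/-- Infinite repetition of a nonempty finite word. -/
def womega (u : List Γ) (hu : u ≠ []) : ℕ → Γ := fun n =>
  u.get ⟨n % u.length, Nat.mod_lt _ (List.length_pos_iff.mpr hu)⟩

/-- The finite word `p 0 · (l 0)^(n 0) · ⋯ · p (i-1) · (l (i-1))^(n (i-1))`. -/
def schemaPrefix (p l : ℕ → List Γ) (n : ℕ → ℕ) : ℕ → List Γ
  | 0 => []
  | i + 1 => schemaPrefix p l n i ++ (p i ++ lpow (l i) (n i))

/-- The ω-word `p_1 l_1^{n_1} ⋯ p_{k-1} l_{k-1}^{n_{k-1}} p_k l_k^ω`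
(with `0`-based indexing of the segments `p` and loops `l`). -/
def schemaWord (k : ℕ) (p l : ℕ → List Γ) (n : ℕ → ℕ) (h : l (k - 1) ≠ []) : ℕ → Γ :=
  wcat (schemaPrefix p l n (k - 1) ++ p (k - 1)) (womega (l (k - 1)) h)

/-! Deleting one copy of a loop that is repeated at least `2^(N+1)` times does not change the
`≡_N`-class, as an Ehrenfeucht–Fraïssé argument shows: Duplicator answers each move either at
the same position or shifted by the length `L` of the loop, keeping positions answered in the two
ways more than `2^r (L + 1)` apart when `r` rounds remain. Halving this distance each round leaves
room for `N` rounds, and changing the loop counts one at a time gives the theorem. -/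

section EhrenfeuchtFraisse

def AtomEquiv (w w' : ℕ → Γ) (f f' : ℕ → ℕ) : Prop :=
  ∀ x y, w (f x) = w' (f' x) ∧ (f x < f y ↔ f' x < f' y) ∧ (f x = f y ↔ f' x = f' y) ∧
    (f y = f x + 1 ↔ f' y = f' x + 1)

theorem FO.sat_iff_of_backAndForth {w w' : ℕ → Γ} (R : ℕ → (ℕ → ℕ) → (ℕ → ℕ) → Prop)
    (atoms : ∀ r f f', R r f f' → AtomEquiv w w' f f')
    (forth : ∀ r (f f' : ℕ → ℕ) (z a : ℕ), R (r + 1) f f' →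
      ∃ b, R r (Function.update f z a) (Function.update f' z b))
    (back : ∀ r (f f' : ℕ → ℕ) (z b : ℕ), R (r + 1) f f' →
      ∃ a, R r (Function.update f z a) (Function.update f' z b))
    (φ : FO Γ) {r : ℕ} {f f' : ℕ → ℕ} (hφ : φ.qh ≤ r) (h : R r f f') :
    φ.Sat w f ↔ φ.Sat w' f' := by
  induction φ generalizing r f f' with
  | letter a z => simp only [FO.Sat, (atoms r f f' h z z).1]
  | succ z z' => exact (atoms r f f' h z z').2.2.2
  | lt z z' => exact (atoms r f f' h z z').2.1
  | eq z z' => exact (atoms r f f' h z z').2.2.1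
  | not φ ih => exact not_congr (ih hφ h)
  | and φ ψ ihφ ihψ =>
    rw [FO.qh, max_le_iff] at hφ
    exact and_congr (ihφ hφ.1 h) (ihψ hφ.2 h)
  | ex z φ ih =>
    obtain ⟨r, rfl⟩ : ∃ s, r = s + 1 := ⟨r - 1, by rw [FO.qh] at hφ; omega⟩
    have hφ : φ.qh ≤ r := by rw [FO.qh] at hφ; omega
    constructor
    · rintro ⟨a, ha⟩
      obtain ⟨b, hb⟩ := forth r f f' z a h
      exact ⟨b, (ih hφ hb).1 ha⟩
    · rintro ⟨b, hb⟩
      obtain ⟨a, ha⟩ := back r f f' z b h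
      exact ⟨a, (ih hφ ha).2 hb⟩

theorem foEquiv_of_backAndForth {w w' : ℕ → Γ} {N : ℕ} (R : ℕ → (ℕ → ℕ) → (ℕ → ℕ) → Prop)
    (atoms : ∀ r f f', R r f f' → AtomEquiv w w' f f')
    (forth : ∀ r (f f' : ℕ → ℕ) (z a : ℕ), R (r + 1) f f' →
      ∃ b, R r (Function.update f z a) (Function.update f' z b))
    (back : ∀ r (f f' : ℕ → ℕ) (z b : ℕ), R (r + 1) f f' →
      ∃ a, R r (Function.update f z a) (Function.update f' z b))
    (hstart : R N (fun _ => 0) (fun _ => 0)) : FOEquiv N w w' :=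
  fun φ _ hφ => FO.sat_iff_of_backAndForth R atoms forth back φ hφ hstart

end EhrenfeuchtFraisse

theorem FOEquiv.refl (n : ℕ) (w : ℕ → Γ) : FOEquiv n w w := fun _ _ _ => Iff.rfl

theorem FOEquiv.symm {n : ℕ} {w w' : ℕ → Γ} (h : FOEquiv n w w') : FOEquiv n w' w :=
  fun φ h₁ h₂ => (h φ h₁ h₂).symm

theorem FOEquiv.trans {n : ℕ} {w w' w'' : ℕ → Γ} (h : FOEquiv n w w') (h' : FOEquiv n w' w'') :
    FOEquiv n w w'' :=
  fun φ h₁ h₂ => (h φ h₁ h₂).trans (h' φ h₁ h₂)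

instance (n : ℕ) : @Trans (ℕ → Γ) (ℕ → Γ) (ℕ → Γ) (FOEquiv n) (FOEquiv n) (FOEquiv n) :=
  ⟨FOEquiv.trans⟩

section Shift

variable (P M L : ℕ)

/-- Position `f x` of `w` is matched with `f' x` of `w'` either identically, more than `d` left of
the end `P + M + L` of the `L`-periodic part of `w`, or shifted by `L`, more than `d` right of
`P + L`; identically matched positions lie more than `d` below shifted ones. -/
def ShiftMatching (d : ℕ) (f f' : ℕ → ℕ) : Prop :=
  ∀ x y, (f' x = f x ∧ f x + d < P + M + L ∨ f x = f' x + L ∧ P + d ≤ f' x) ∧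
    (f' x = f x → f y = f' y + L → f x + d < f y)

variable {P M L}

theorem ShiftMatching.mono {d e : ℕ} {f f' : ℕ → ℕ} (h : ShiftMatching P M L e f f')
    (hde : d ≤ e) : ShiftMatching P M L d f f' := by
  intro x y
  have := h x y
  omega

theorem ShiftMatching.atomEquiv {w w' : ℕ → Γ} (hagree : ∀ q < P + M, w q = w' q)
    (hshift : ∀ q, P ≤ q → w (q + L) = w' q) {d : ℕ} (hd : L + 1 ≤ d) {f f' : ℕ → ℕ}
    (h : ShiftMatching P M L d f f') : AtomEquiv w w' f f' := by
  intro x y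
  have hx := h x y
  have hy := h y x
  refine ⟨?_, by omega, by omega, by omega⟩
  rcases hx.1 with ⟨hxx, hxM⟩ | ⟨hxx, hxP⟩
  · rw [hxx, hagree _ (by omega)]
  · rw [hxx, hshift _ (by omega)]

theorem ShiftMatching.left_or_right {d : ℕ} (hM : 2 * d ≤ M) {f f' : ℕ → ℕ}
    (h : ShiftMatching P M L (2 * d) f f') (c : ℕ) :
    (c + d < P + M + L ∧ ∀ y, f y = f' y + L → c + d < f y) ∨
      ∀ a, c ≤ a → P + L + d ≤ a ∧ ∀ y, f' y = f y → f y + d < a := by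
  by_cases hleft : c + d < P + M + L ∧ ∀ y, f y = f' y + L → c + d < f y
  · exact Or.inl hleft
  right
  intro a hca
  -- as `c` cannot be matched identically, `c + d` reaches an anchor lying `2 * d` right of `P + L`
  -- and of all identically matched positions: the end of the periodic part or a shifted position
  by_cases hend : c + d < P + M + L
  · push Not at hleft
    obtain ⟨v, hv, hvc⟩ := hleft hend
    have := h v v
    refine ⟨by omega, fun y hy => ?_⟩
    have := h y v
    omega
  · refine ⟨by omega, fun y hy => ?_⟩
    have := h y y
    omega

theorem ShiftMatching.update {d : ℕ} (hL : 0 < L) {f f' : ℕ → ℕ}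
    (h : ShiftMatching P M L d f f') (z a b : ℕ)
    (hab : (b = a ∧ a + d < P + M + L ∧ ∀ y, f y = f' y + L → a + d < f y) ∨
      (a = b + L ∧ P + d ≤ b ∧ ∀ y, f' y = f y → f y + d < a)) :
    ShiftMatching P M L d (Function.update f z a) (Function.update f' z b) := by
  intro x y
  have hxy := h x y
  have hnew : (b = a ∧ a + d < P + M + L ∧ (f y = f' y + L → a + d < f y)) ∨
      (a = b + L ∧ P + d ≤ b ∧ (f' x = f x → f x + d < a)) :=
    hab.imp (fun h => ⟨h.1, h.2.1, h.2.2 y⟩) (fun h => ⟨h.1, h.2.1, h.2.2 x⟩)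
  simp only [Function.update_apply]
  split_ifs <;> omega

theorem ShiftMatching.exists_update {d : ℕ} (hL : 0 < L) (hM : 2 * d ≤ M) {f f' : ℕ → ℕ}
    (h : ShiftMatching P M L (2 * d) f f') (z c : ℕ) :
    (∃ b, ShiftMatching P M L d (Function.update f z c) (Function.update f' z b)) ∧
      ∃ a, ShiftMatching P M L d (Function.update f z a) (Function.update f' z c) := by
  have hd := h.mono (d := d) (by omega)
  rcases h.left_or_right hM c with hleft | hright
  · have hcc := hd.update hL z c c (Or.inl ⟨rfl, hleft⟩)
    exact ⟨⟨c, hcc⟩, ⟨c, hcc⟩⟩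
  · obtain ⟨hc, hcleft⟩ := hright c le_rfl
    obtain ⟨-, hcLleft⟩ := hright (c + L) (by omega)
    exact ⟨⟨c - L, hd.update hL z c (c - L) (Or.inr ⟨by omega, by omega, hcleft⟩)⟩,
      ⟨c + L, hd.update hL z (c + L) c (Or.inr ⟨rfl, by omega, hcLleft⟩)⟩⟩

theorem foEquiv_of_shift {w w' : ℕ → Γ} {N : ℕ} (hL : 0 < L) (hM : 2 ^ N * (L + 1) ≤ M)
    (hagree : ∀ q < P + M, w q = w' q) (hshift : ∀ q, P ≤ q → w (q + L) = w' q) :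
    FOEquiv N w w' := by
  have hdist (r : ℕ) : L + 1 ≤ 2 ^ r * (L + 1) := Nat.le_mul_of_pos_left _ (Nat.two_pow_pos r)
  have hdouble (r : ℕ) : 2 ^ (r + 1) * (L + 1) = 2 * (2 ^ r * (L + 1)) := by ring
  have hroom (r : ℕ) (hr : r + 1 ≤ N) : 2 * (2 ^ r * (L + 1)) ≤ M :=
    hdouble r ▸ (Nat.mul_le_mul_right _ (Nat.pow_le_pow_right two_pos hr)).trans hM
  refine foEquiv_of_backAndForth
    (fun r f f' => r ≤ N ∧ ShiftMatching P M L (2 ^ r * (L + 1)) f f')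
    (fun r _ _ h => h.2.atomEquiv hagree hshift (hdist r))
    (fun r f f' z a ⟨hr, h⟩ => ?_) (fun r f f' z b ⟨hr, h⟩ => ?_) ⟨le_rfl, fun x y => ?_⟩
  · rw [hdouble] at h
    obtain ⟨b, hb⟩ := (h.exists_update hL (hroom r hr) z a).1
    exact ⟨b, by omega, hb⟩
  · rw [hdouble] at h
    obtain ⟨a, ha⟩ := (h.exists_update hL (hroom r hr) z b).2
    exact ⟨a, by omega, ha⟩
  · exact ⟨Or.inl ⟨rfl, show 0 + _ < _ by omega⟩, fun _ h => by beta_reduce at h; omega⟩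

end Shift

theorem lpow_length (u : List Γ) (m : ℕ) : (lpow u m).length = m * u.length := by
  induction m with
  | zero => simp [lpow]
  | succ m ih => rw [lpow, List.length_append, ih]; ring

theorem lpow_succ' (u : List Γ) (m : ℕ) : lpow u (m + 1) = lpow u m ++ u := by
  induction m with
  | zero => simp [lpow]
  | succ m ih =>
    show u ++ lpow u (m + 1) = (u ++ lpow u m) ++ u
    rw [ih, List.append_assoc]

theorem wcat_apply_of_lt {u : List Γ} {q : ℕ} (h : q < u.length) (t : ℕ → Γ) :
    wcat u t q = u[q] :=
  dif_pos h

theorem wcat_apply_length_add (u : List Γ) (t : ℕ → Γ) (q : ℕ) :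
    wcat u t (u.length + q) = t q := by
  rw [wcat, dif_neg (by omega), Nat.add_sub_cancel_left]

theorem wcat_append (u v : List Γ) (t : ℕ → Γ) : wcat (u ++ v) t = wcat u (wcat v t) := by
  funext q
  rcases lt_or_ge q u.length with hu | hu
  · rw [wcat_apply_of_lt (by simp; omega), wcat_apply_of_lt hu, List.getElem_append_left hu]
  obtain ⟨r, rfl⟩ := Nat.exists_eq_add_of_le hu
  rw [wcat_apply_length_add]
  rcases lt_or_ge r v.length with hv | hv
  · rw [wcat_apply_of_lt (by simp; omega), wcat_apply_of_lt hv,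
      List.getElem_append_right (by omega)]
    simp
  obtain ⟨s, rfl⟩ := Nat.exists_eq_add_of_le hv
  rw [← Nat.add_assoc, ← List.length_append, wcat_apply_length_add, wcat_apply_length_add]

theorem foEquiv_wcat_lpow_succ {N c : ℕ} {u : List Γ} (hu : u ≠ []) (hc : 2 ^ (N + 1) ≤ c)
    (X : List Γ) (y : ℕ → Γ) :
    FOEquiv N (wcat X (wcat (lpow u (c + 1)) y)) (wcat X (wcat (lpow u c) y)) := by
  have hL : 0 < u.length := List.length_pos_iff.mpr hu
  refine foEquiv_of_shift (P := X.length) (L := u.length) (M := c * u.length) hL ?_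
    (fun q hq => ?_) (fun q hq => ?_)
  · calc 2 ^ N * (u.length + 1) ≤ 2 ^ N * (2 * u.length) := by gcongr; omega
      _ = 2 ^ (N + 1) * u.length := by ring
      _ ≤ c * u.length := by gcongr
  · have hq' : q < (X ++ lpow u c).length := by simp [lpow_length, hq]
    calc wcat X (wcat (lpow u (c + 1)) y) q = wcat (X ++ lpow u c) (wcat u y) q := by
          rw [lpow_succ', wcat_append, wcat_append]
      _ = wcat (X ++ lpow u c) y q := by rw [wcat_apply_of_lt hq', wcat_apply_of_lt hq']
      _ = wcat X (wcat (lpow u c) y) q := by rw [wcat_append]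
  · obtain ⟨r, rfl⟩ := Nat.exists_eq_add_of_le hq
    rw [Nat.add_assoc, Nat.add_comm r, wcat_apply_length_add, wcat_apply_length_add,
      lpow, wcat_append, wcat_apply_length_add]

theorem foEquiv_wcat_lpow_of_le {N c c' : ℕ} {u : List Γ} (hu : u ≠ []) (hc : 2 ^ (N + 1) ≤ c)
    (hcc' : c ≤ c') (X : List Γ) (y : ℕ → Γ) :
    FOEquiv N (wcat X (wcat (lpow u c') y)) (wcat X (wcat (lpow u c) y)) := by
  induction c', hcc' using Nat.le_induction with
  | base => exact FOEquiv.refl _ _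
  | succ c' hle ih => exact (foEquiv_wcat_lpow_succ hu (hc.trans hle) X y).trans ih

theorem foEquiv_wcat_lpow_of_min_eq {N c c' : ℕ} {u : List Γ} (hu : u ≠ [])
    (h : min c (2 ^ (N + 1) + 1) = min c' (2 ^ (N + 1) + 1)) (X : List Γ) (y : ℕ → Γ) :
    FOEquiv N (wcat X (wcat (lpow u c) y)) (wcat X (wcat (lpow u c') y)) := by
  rcases eq_or_ne c c' with rfl | hne
  · exact FOEquiv.refl _ _
  rcases le_total c c' with hle | hle
  · exact (foEquiv_wcat_lpow_of_le hu (by omega) hle X y).symm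
  · exact foEquiv_wcat_lpow_of_le hu (by omega) hle X y

theorem foEquiv_wcat_schemaPrefix {N : ℕ} {p l : ℕ → List Γ} {n n' : ℕ → ℕ} {j : ℕ}
    (hl : ∀ i < j, l i ≠ [])
    (hmin : ∀ i < j, min (n i) (2 ^ (N + 1) + 1) = min (n' i) (2 ^ (N + 1) + 1))
    (B : List Γ) (t : ℕ → Γ) :
    FOEquiv N (wcat (schemaPrefix p l n j ++ B) t) (wcat (schemaPrefix p l n' j ++ B) t) := by
  induction j generalizing B with
  | zero => exact FOEquiv.refl _ _
  | succ j ih =>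
    have hsucc (m : ℕ → ℕ) : wcat (schemaPrefix p l m (j + 1) ++ B) t =
        wcat (schemaPrefix p l m j ++ (p j ++ lpow (l j) (m j) ++ B)) t := by
      simp only [schemaPrefix, List.append_assoc]
    calc wcat (schemaPrefix p l n (j + 1) ++ B) t
        = wcat (schemaPrefix p l n j ++ (p j ++ lpow (l j) (n j) ++ B)) t := hsucc n
      FOEquiv N _ (wcat (schemaPrefix p l n' j ++ (p j ++ lpow (l j) (n j) ++ B)) t) :=
          ih (fun i hi => hl i (by omega)) (fun i hi => hmin i (by omega)) _
      _ = wcat (schemaPrefix p l n' j ++ p j) (wcat (lpow (l j) (n j)) (wcat B t)) := by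
          simp only [wcat_append, List.append_assoc]
      FOEquiv N _ (wcat (schemaPrefix p l n' j ++ p j) (wcat (lpow (l j) (n' j)) (wcat B t))) :=
          foEquiv_wcat_lpow_of_min_eq (hl j (by omega)) (hmin j (by omega)) _ _
      _ = wcat (schemaPrefix p l n' (j + 1) ++ B) t := by
          rw [hsucc]
          simp only [wcat_append, List.append_assoc]

/-- If the loop-iteration counts `n` and `n'` agree after truncation at
`T = 2^(N+1) + 1`, then the corresponding ω-words are `≡_N`-equivalent. -/
theorem stuttering_fo_schema {Γ : Type*} (N : ℕ)
    (k : ℕ) (hk : 0 < k) (p l : ℕ → List Γ) (hl : ∀ i, i < k → l i ≠ [])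
    (n n' : ℕ → ℕ)
    (hmin : ∀ i, i < k - 1 →
      min (n i) (2 ^ (N + 1) + 1) = min (n' i) (2 ^ (N + 1) + 1)) :
    FOEquiv N (schemaWord k p l n (hl (k - 1) (by omega)))
      (schemaWord k p l n' (hl (k - 1) (by omega))) :=
  foEquiv_wcat_schemaPrefix (fun i hi => hl i (by omega)) hmin _ _

end Stmt2
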